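/- Let A : (0, r₁] → (0,∞) be a differentiable function with lim_{r→0⁺} A(r)/rⁿ = ω_n, let n ∈ ℕ, H₀ ≥ 0 and c ≥ 0, and suppose that 2r·A'(r) ≥ 2n(1 − c·r²)·A(r) − 2nH₀r·A(r) for all r ∈ (0,r₁]. Then the function r ↦ A(r)/(rⁿ e^{−nr(H₀ + ½cr)}) is non-decreasing on (0, r₁], and consequently A(r) ≥ ω_n·rⁿ·e^{−nr(H₀ + ½cr)} for all r ∈ (0, r₁]. -/

import Mathlib

open Set Filter Topology

/-!
The weight `g(r) = rⁿ e^{−nr(H₀ + ½cr)}` (`areaWeight`) has logarithmic derivative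
`n/r − n(H₀ + cr)`. Divided by `2r`, the differential inequality says exactly that the
logarithmic derivative of `A` dominates that of `g`, so `A/g` is non-decreasing. As `r → 0⁺`
the exponential factor tends to `1`, so `A/g → ωₙ`, and monotonicity gives `ωₙ ≤ A/g` on
`(0, r₁]`.
-/

theorem monotoneOn_div_of_mul_le_deriv {s : Set ℝ} (hs : Convex ℝ s) {f f' g ℓ : ℝ → ℝ}
    (hf : ∀ x ∈ s, HasDerivWithinAt f (f' x) s x)
    (hg : ∀ x ∈ s, HasDerivWithinAt g (g x * ℓ x) s x) (hg_pos : ∀ x ∈ s, 0 < g x)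
    (hle : ∀ x ∈ interior s, ℓ x * f x ≤ f' x) :
    MonotoneOn (fun x => f x / g x) s := by
  have hquot : ∀ x ∈ s, HasDerivWithinAt (fun x => f x / g x)
      ((f' x - ℓ x * f x) / g x) s x := fun x hx =>
    ((hf x hx).div (hg x hx) (hg_pos x hx).ne').congr_deriv (by field_simp)
  refine monotoneOn_of_hasDerivWithinAt_nonneg hs
    (fun x hx => (hquot x hx).continuousWithinAt)
    (fun x hx => (hquot x (interior_subset hx)).mono interior_subset) fun x hx => ?_
  exact div_nonneg (sub_nonneg.mpr (hle x hx)) (hg_pos x (interior_subset hx)).le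

theorem MonotoneOn.le_of_tendsto_nhdsGT {β : Type*} [TopologicalSpace β] [Preorder β]
    [ClosedIicTopology β] {F : ℝ → β} {a b : ℝ} {l : β} (hF : MonotoneOn F (Ioc a b))
    (hlim : Tendsto F (𝓝[>] a) (𝓝 l)) {r : ℝ} (hr : r ∈ Ioc a b) : l ≤ F r := by
  refine le_of_tendsto hlim ?_
  filter_upwards [Ioo_mem_nhdsGT hr.1] with s hs
  exact hF ⟨hs.1, (hs.2.trans_le hr.2).le⟩ hr hs.2.le

noncomputable def areaWeight (n : ℕ) (H0 c r : ℝ) : ℝ :=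
  r ^ n * Real.exp (-(n : ℝ) * r * (H0 + (1 / 2) * c * r))

section areaWeight

variable (n : ℕ) (H0 c : ℝ)

theorem areaWeight_pos {r : ℝ} (hr : 0 < r) : 0 < areaWeight n H0 c r :=
  mul_pos (pow_pos hr n) (Real.exp_pos _)

theorem hasDerivAt_areaWeight {r : ℝ} (hr : r ≠ 0) :
    HasDerivAt (areaWeight n H0 c) (areaWeight n H0 c r * (n / r - n * (H0 + c * r))) r := by
  have hexponent : HasDerivAt (fun r : ℝ => -(n : ℝ) * r * (H0 + (1 / 2) * c * r))
      (-(n : ℝ) * (H0 + c * r)) r :=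
    (((hasDerivAt_id' r).const_mul (-(n : ℝ))).mul
      (((hasDerivAt_id' r).const_mul ((1 / 2) * c)).const_add H0)).congr_deriv (by ring)
  unfold areaWeight
  refine ((hasDerivAt_pow n r).mul hexponent.exp).congr_deriv ?_
  rcases n with _ | m
  · simp
  · simp only [Nat.add_sub_cancel, pow_succ]
    field_simp
    ring

theorem tendsto_div_areaWeight {f : ℝ → ℝ} {l : ℝ}
    (hf : Tendsto (fun r => f r / r ^ n) (𝓝[>] 0) (𝓝 l)) :
    Tendsto (fun r => f r / areaWeight n H0 c r) (𝓝[>] 0) (𝓝 l) := by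
  have hexp : Tendsto (fun r : ℝ => Real.exp (-(n : ℝ) * r * (H0 + (1 / 2) * c * r)))
      (𝓝[>] 0) (𝓝 1) := by
    have hcont : Continuous fun r : ℝ => Real.exp (-(n : ℝ) * r * (H0 + (1 / 2) * c * r)) := by
      fun_prop
    simpa using (hcont.tendsto 0).mono_left nhdsWithin_le_nhds
  unfold areaWeight
  simpa only [Pi.div_def, div_one, div_div] using hf.div hexp one_ne_zero

end areaWeight

theorem monotonicity_core_positive_curvature_general
    (n : ℕ) (H0 c r1 : ℝ)
    (A A' : ℝ → ℝ)
    (hderiv : ∀ r ∈ Set.Ioc 0 r1, HasDerivWithinAt A (A' r) (Set.Ioc 0 r1) r)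
    (hlim : Filter.Tendsto (fun r => A r / r ^ n) (nhdsWithin 0 (Set.Ioi 0))
      (nhds ((MeasureTheory.volume (Metric.ball (0 : EuclideanSpace ℝ (Fin n)) 1)).toReal)))
    (hode : ∀ r ∈ Set.Ioc 0 r1,
      2 * n * (1 - c * r ^ 2) * A r - 2 * n * H0 * r * A r ≤ 2 * r * A' r) :
    MonotoneOn
        (fun r => A r / (r ^ n * Real.exp (-(n : ℝ) * r * (H0 + (1 / 2) * c * r))))
        (Set.Ioc 0 r1) ∧
      ∀ r ∈ Set.Ioc 0 r1,
        (MeasureTheory.volume (Metric.ball (0 : EuclideanSpace ℝ (Fin n)) 1)).toReal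
          * r ^ n * Real.exp (-(n : ℝ) * r * (H0 + (1 / 2) * c * r)) ≤ A r := by
  have hlogDeriv : ∀ r ∈ Ioc 0 r1, (n / r - n * (H0 + c * r)) * A r ≤ A' r := fun r hr => by
    have hr0 : 0 < r := hr.1
    have hscaled : 2 * r * ((n / r - n * (H0 + c * r)) * A r)
        = 2 * n * (1 - c * r ^ 2) * A r - 2 * n * H0 * r * A r := by
      field_simp
      ring
    exact le_of_mul_le_mul_left (hscaled.trans_le (hode r hr)) (by positivity)
  have hmono : MonotoneOn (fun r => A r / areaWeight n H0 c r) (Ioc 0 r1) :=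
    monotoneOn_div_of_mul_le_deriv (convex_Ioc 0 r1) hderiv
      (fun r hr => (hasDerivAt_areaWeight n H0 c hr.1.ne').hasDerivWithinAt)
      (fun r hr => areaWeight_pos n H0 c hr.1)
      (fun r hr => hlogDeriv r (interior_subset hr))
  refine ⟨hmono, fun r hr => ?_⟩
  have hbound := hmono.le_of_tendsto_nhdsGT (tendsto_div_areaWeight n H0 c hlim) hr
  rwa [le_div_iff₀ (areaWeight_pos n H0 c hr.1), areaWeight, ← mul_assoc] at hbound

/-- The real-analytic core of the intrinsic monotonicity of area
formula in the case of a positive upper curvature bound: if `A : (0, r₁] → (0, ∞)` is a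
differentiable function with `A(r)/rⁿ → ωₙ` as `r → 0⁺` (where `ωₙ` is the volume of
the unit ball in `ℝⁿ`), `H₀ ≥ 0`, `c ≥ 0`, and
`2r·A'(r) ≥ 2n(1 − c·r²)·A(r) − 2n·H₀·r·A(r)` on `(0, r₁]`, then
`r ↦ A(r)/(rⁿ e^{−nr(H₀ + ½cr)})` is non-decreasing on `(0, r₁]`, and consequently
`A(r) ≥ ωₙ·rⁿ·e^{−nr(H₀ + ½cr)}` there. -/
theorem monotonicity_core_positive_curvature
    (n : ℕ) (H0 c r1 : ℝ) (hH0 : 0 ≤ H0) (hc : 0 ≤ c) (hr1 : 0 < r1)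
    (A A' : ℝ → ℝ)
    (hApos : ∀ r ∈ Set.Ioc 0 r1, 0 < A r)
    (hderiv : ∀ r ∈ Set.Ioc 0 r1, HasDerivWithinAt A (A' r) (Set.Ioc 0 r1) r)
    (hlim : Filter.Tendsto (fun r => A r / r ^ n) (nhdsWithin 0 (Set.Ioi 0))
      (nhds ((MeasureTheory.volume (Metric.ball (0 : EuclideanSpace ℝ (Fin n)) 1)).toReal)))
    (hode : ∀ r ∈ Set.Ioc 0 r1,
      2 * n * (1 - c * r ^ 2) * A r - 2 * n * H0 * r * A r ≤ 2 * r * A' r) :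
    MonotoneOn
        (fun r => A r / (r ^ n * Real.exp (-(n : ℝ) * r * (H0 + (1 / 2) * c * r))))
        (Set.Ioc 0 r1) ∧
      ∀ r ∈ Set.Ioc 0 r1,
        (MeasureTheory.volume (Metric.ball (0 : EuclideanSpace ℝ (Fin n)) 1)).toReal
          * r ^ n * Real.exp (-(n : ℝ) * r * (H0 + (1 / 2) * c * r)) ≤ A r :=
  monotonicity_core_positive_curvature_general n H0 c r1 A A' hderiv hlim hode
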